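/- arXiv:math/0202214 — 6 statements merged into one kernel-verified Lean document; each statement's English description precedes it below -/
import Mathlib

section
/- The Lawrence–Krammer matrix of each Artin generator satisfies the cubic relation (K(σ_i) − I)(K(σ_i) + qI)(K(σ_i) + tq² I) = 0, where I is the n(n−1)/2-dimensional identity matrix. -/
open Matrix

noncomputable section

/-- Braid relations among the Artin generators `σ_1, …, σ_{n-1}`
(indexed here by `Fin (n-1)`, with `i : Fin (n-1)` standing for `σ_{i+1}`). -/
def braidRels (n : ℕ) : Set (FreeGroup (Fin (n - 1))) :=
  {r | (∃ i j : Fin (n - 1), (i : ℕ) + 1 = (j : ℕ) ∧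
          r = .of i * .of j * .of i * (.of j * .of i * .of j)⁻¹) ∨
       (∃ i j : Fin (n - 1), (i : ℕ) + 2 ≤ (j : ℕ) ∧
          r = .of i * .of j * (.of j * .of i)⁻¹)}

/-- The braid group `B_n` as a presented group. -/
abbrev Braid (n : ℕ) := PresentedGroup (braidRels n)

/-- The Artin generator `σ_{i+1}` of `B_n`. -/
def σg {n : ℕ} (i : Fin (n - 1)) : Braid n := PresentedGroup.of i

/-- Index set `{(i,j) : 1 ≤ i < j ≤ n}` for the Lawrence–Krammer basis `X_{i,j}`. -/
abbrev BP (n : ℕ) := {p : Fin (n + 1) × Fin (n + 1) // 0 < (p.1 : ℕ) ∧ (p.1 : ℕ) < (p.2 : ℕ)}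

/-- The standard basis row vector `X_{a,b}`. -/
def ee {R : Type*} [CommRing R] (n a b : ℕ) : BP n → R :=
  fun c => if (c.val.1 : ℕ) = a ∧ (c.val.2 : ℕ) = b then 1 else 0

/-- The Lawrence–Krammer matrix of the Artin generator `σ_m` (1-based `m`),
with parameters `t`, `q`; row `(i,j)` is the expansion of `X_{i,j}·σ_m` in the basis. -/
def LKgen {R : Type*} [CommRing R] (t q : R) (n m : ℕ) : Matrix (BP n) (BP n) R :=
  fun r c =>
    let i := (r.val.1 : ℕ); let j := (r.val.2 : ℕ)
    if m = i ∧ j = i + 1 then -(t * q ^ 2) * ee n i j c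
    else if m = i then
      q * ee n (i + 1) j c + (1 - q) * ee n i j c + t * q * (1 - q) * ee n i (i + 1) c
    else if m = j then
      q * ee n i (j + 1) c + (1 - q) * ee n i j c - q * (1 - q) * ee n j (j + 1) c
    else if m + 1 = i then ee n (i - 1) j c
    else if m + 1 = j then ee n i (j - 1) c
    else ee n i j c

/-- The field `ℚ(t,q)` of rational functions in two variables. -/
abbrev F2 := FractionRing (MvPolynomial (Fin 2) ℚ)

/-- The variable `t` in `ℚ(t,q)`. -/
def tt : F2 := algebraMap (MvPolynomial (Fin 2) ℚ) F2 (MvPolynomial.X 0)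

/-- The variable `q` in `ℚ(t,q)`. -/
def qq : F2 := algebraMap (MvPolynomial (Fin 2) ℚ) F2 (MvPolynomial.X 1)

set_option linter.unusedSectionVars false

section Aux

variable {R : Type*} [CommRing R] {I : Type*} [Fintype I] [DecidableEq I]

lemma vecMul_add_smul_one (M : Matrix I I R) (c : R) (x : I → R) :
    x ᵥ* (M + c • (1 : Matrix I I R)) = x ᵥ* M + c • x := by
  rw [Matrix.vecMul_add]
  congr 1
  funext j
  simp [Matrix.vecMul, dotProduct, Matrix.smul_apply, Matrix.one_apply, mul_ite,
    Finset.sum_ite_eq', mul_comm]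

lemma row_mul (A B : Matrix I I R) (r : I) : (A * B) r = A r ᵥ* B := by
  funext c; simp [Matrix.mul_apply, Matrix.vecMul, dotProduct]

lemma cubic_aux0 (M : Matrix I I R) (t q lam : R) (u : I → R)
    (hlam : (lam - 1) * (lam + q) * (lam + t * q ^ 2) = 0)
    (hu : u ᵥ* M = lam • u) :
    ((u ᵥ* M - u) ᵥ* M + q • (u ᵥ* M - u)) ᵥ* M
      + (t * q ^ 2) • ((u ᵥ* M - u) ᵥ* M + q • (u ᵥ* M - u)) = 0 := by
  simp only [hu, Matrix.sub_vecMul, Matrix.add_vecMul, Matrix.smul_vecMul]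
  rw [show (lam • lam • lam • u - lam • lam • u + q • (lam • lam • u - lam • u) +
      (t * q ^ 2) • (lam • lam • u - lam • u + q • (lam • u - u)))
      = ((lam - 1) * (lam + q) * (lam + t * q ^ 2)) • u from by module, hlam, zero_smul]

lemma cubic_aux1 (M : Matrix I I R) (t q s : R) (u v w : I → R)
    (hu : u ᵥ* M = (1 - q) • u + q • v + s • w)
    (hv : v ᵥ* M = u)
    (hw : w ᵥ* M = (-(t * q ^ 2)) • w) :
    ((u ᵥ* M - u) ᵥ* M + q • (u ᵥ* M - u)) ᵥ* M
      + (t * q ^ 2) • ((u ᵥ* M - u) ᵥ* M + q • (u ᵥ* M - u)) = 0 := by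
  simp only [hu, hv, hw, Matrix.sub_vecMul, Matrix.add_vecMul, Matrix.smul_vecMul]
  module

lemma cubic_aux2 (M : Matrix I I R) (t q s : R) (u v w : I → R)
    (hu : u ᵥ* M = v)
    (hv : v ᵥ* M = q • u + (1 - q) • v + s • w)
    (hw : w ᵥ* M = (-(t * q ^ 2)) • w) :
    ((u ᵥ* M - u) ᵥ* M + q • (u ᵥ* M - u)) ᵥ* M
      + (t * q ^ 2) • ((u ᵥ* M - u) ᵥ* M + q • (u ᵥ* M - u)) = 0 := by
  simp only [hu, hv, hw, Matrix.sub_vecMul, Matrix.add_vecMul, Matrix.smul_vecMul]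
  module

def bp (n a b : ℕ) (ha : 0 < a) (hab : a < b) (hb : b ≤ n) : BP n :=
  ⟨(⟨a, by omega⟩, ⟨b, by omega⟩), by exact ⟨ha, hab⟩⟩

lemma bp_iff {n a b : ℕ} (ha : 0 < a) (hab : a < b) (hb : b ≤ n) (c : BP n) :
    (((c.val.1 : ℕ) = a ∧ (c.val.2 : ℕ) = b)) ↔ c = bp n a b ha hab hb := by
  constructor
  · rintro ⟨h1, h2⟩
    apply Subtype.ext; apply Prod.ext <;> apply Fin.ext <;> simpa [bp]
  · rintro rfl; exact ⟨rfl, rfl⟩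

lemma ee_vecMul {R : Type*} [CommRing R] {n a b : ℕ} (ha : 0 < a) (hab : a < b) (hb : b ≤ n)
    (M : Matrix (BP n) (BP n) R) :
    (ee n a b : BP n → R) ᵥ* M = M (bp n a b ha hab hb) := by
  funext c
  simp only [Matrix.vecMul, dotProduct, ee]
  rw [Finset.sum_congr rfl (fun r _ => by rw [if_congr (bp_iff ha hab hb r) rfl rfl])]
  simp

lemma one_row {R : Type*} [CommRing R] {n a b : ℕ} (ha : 0 < a) (hab : a < b) (hb : b ≤ n) :
    (1 : Matrix (BP n) (BP n) R) (bp n a b ha hab hb) = ee n a b := by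
  funext c
  rw [Matrix.one_apply, ee, if_congr ((bp_iff ha hab hb c).trans eq_comm) rfl rfl]

lemma LK_apply {R : Type*} [CommRing R] (t q : R) (n m i j : ℕ) (hi : 0 < i) (hij : i < j)
    (hj : j ≤ n) (c : BP n) :
    LKgen t q n m (bp n i j hi hij hj) c =
      if m = i ∧ j = i + 1 then -(t * q ^ 2) * ee n i j c
      else if m = i then
        q * ee n (i + 1) j c + (1 - q) * ee n i j c + t * q * (1 - q) * ee n i (i + 1) c
      else if m = j then
        q * ee n i (j + 1) c + (1 - q) * ee n i j c - q * (1 - q) * ee n j (j + 1) c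
      else if m + 1 = i then ee n (i - 1) j c
      else if m + 1 = j then ee n i (j - 1) c
      else ee n i j c := rfl

lemma row_sub {R : Type*} [CommRing R] {I : Type*} (A B : Matrix I I R) (r : I) :
    (A - B) r = A r - B r := rfl

lemma lk_cubic_general {R : Type*} [CommRing R] (t q : R) (n m : ℕ) (hm1 : 1 ≤ m)
    (hmn : m + 1 ≤ n) :
    (LKgen t q n m - 1) * (LKgen t q n m + q • (1 : Matrix (BP n) (BP n) R)) *
      (LKgen t q n m + (t * q ^ 2) • (1 : Matrix (BP n) (BP n) R)) = 0 := by
  funext r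
  obtain ⟨⟨⟨i, hi'⟩, ⟨j, hj'⟩⟩, hp⟩ := r
  have hi : 0 < i := hp.1
  have hij : i < j := hp.2
  have hj : j ≤ n := by omega
  have hrr : (⟨(⟨i, hi'⟩, ⟨j, hj'⟩), hp⟩ : BP n) = bp n i j hi hij hj := rfl
  rw [hrr, row_mul, row_mul, row_sub, one_row hi hij hj,
    ← ee_vecMul hi hij hj (LKgen t q n m), vecMul_add_smul_one, vecMul_add_smul_one]
  show _ = (0 : BP n → R)
  set M := LKgen t q n m with hM
  by_cases h1 : m = i ∧ j = i + 1
  · refine cubic_aux0 M t q (-(t * q ^ 2)) _ (by ring) ?_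
    rw [ee_vecMul hi hij hj]
    funext c
    rw [hM, LK_apply, if_pos h1]
    simp [smul_eq_mul]
  by_cases h2 : m = i
  · have hij2 : i + 1 < j := by omega
    refine cubic_aux1 M t q (t * q * (1 - q)) _ (ee n (i + 1) j) (ee n i (i + 1)) ?_ ?_ ?_
    · rw [ee_vecMul hi hij hj]
      funext c
      rw [hM, LK_apply, if_neg (by omega), if_pos (by omega)]
      simp only [Pi.add_apply, Pi.smul_apply, smul_eq_mul]; ring
    · rw [ee_vecMul (by omega) hij2 hj]
      funext c
      rw [hM, LK_apply, if_neg (by omega), if_neg (by omega), if_neg (by omega), if_pos (by omega)]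
      have : i + 1 - 1 = i := by omega
      rw [this]
    · rw [ee_vecMul hi (by omega) (by omega)]
      funext c
      rw [hM, LK_apply, if_pos (by omega)]
      simp [smul_eq_mul]
  by_cases h3 : m = j
  · have hj1 : j + 1 ≤ n := by omega
    refine cubic_aux1 M t q (-(q * (1 - q))) _ (ee n i (j + 1)) (ee n j (j + 1)) ?_ ?_ ?_
    · rw [ee_vecMul hi hij hj]
      funext c
      rw [hM, LK_apply, if_neg (by omega), if_neg (by omega), if_pos (by omega)]
      simp only [Pi.add_apply, Pi.smul_apply, smul_eq_mul]; ring
    · rw [ee_vecMul hi (by omega) hj1]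
      funext c
      rw [hM, LK_apply, if_neg (by omega), if_neg (by omega), if_neg (by omega),
        if_neg (by omega), if_pos (by omega)]
      have : j + 1 - 1 = j := by omega
      rw [this]
    · rw [ee_vecMul (by omega) (by omega) hj1]
      funext c
      rw [hM, LK_apply, if_pos (by omega)]
      simp [smul_eq_mul]
  by_cases h4 : m + 1 = i
  · have hi1 : 0 < i - 1 := by omega
    have hi2 : i - 1 < j := by omega
    refine cubic_aux2 M t q (t * q * (1 - q)) _ (ee n (i - 1) j) (ee n (i - 1) i) ?_ ?_ ?_
    · rw [ee_vecMul hi hij hj]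
      funext c
      rw [hM, LK_apply, if_neg (by omega), if_neg (by omega), if_neg (by omega), if_pos (by omega)]
    · rw [ee_vecMul hi1 hi2 hj]
      funext c
      rw [hM, LK_apply, if_neg (by omega), if_pos (by omega)]
      have e1 : i - 1 + 1 = i := by omega
      rw [e1]
      simp only [Pi.add_apply, Pi.smul_apply, smul_eq_mul]
    · rw [ee_vecMul hi1 (by omega) (by omega)]
      funext c
      rw [hM, LK_apply, if_pos (by constructor <;> omega)]
      simp [smul_eq_mul]
  by_cases h5 : m + 1 = j
  · have him : i < j - 1 := by omega
    have hj1 : j - 1 ≤ n := by omega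
    refine cubic_aux2 M t q (-(q * (1 - q))) _ (ee n i (j - 1)) (ee n (j - 1) j) ?_ ?_ ?_
    · rw [ee_vecMul hi hij hj]
      funext c
      rw [hM, LK_apply, if_neg (by omega), if_neg (by omega), if_neg (by omega),
        if_neg (by omega), if_pos (by omega)]
    · rw [ee_vecMul hi him hj1]
      funext c
      rw [hM, LK_apply, if_neg (by omega), if_neg (by omega), if_pos (by omega)]
      have e1 : j - 1 + 1 = j := by omega
      rw [e1]
      simp only [Pi.add_apply, Pi.sub_apply, Pi.smul_apply, smul_eq_mul]; ring
    · rw [ee_vecMul (by omega) (by omega) hj]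
      funext c
      rw [hM, LK_apply, if_pos (by constructor <;> omega)]
      simp [smul_eq_mul]
  · refine cubic_aux0 M t q 1 _ (by ring) ?_
    rw [ee_vecMul hi hij hj]
    funext c
    rw [hM, LK_apply, if_neg (by omega), if_neg (by omega), if_neg (by omega),
      if_neg (by omega), if_neg (by omega)]
    simp

end Aux

/-- The Lawrence–Krammer matrix of each Artin generator `σ_m`
satisfies the cubic relation `(K(σ_m) − I)(K(σ_m) + q·I)(K(σ_m) + tq²·I) = 0`. -/
theorem lk_cubic_relation (n m : ℕ) (hm1 : 1 ≤ m) (hm2 : m ≤ n - 1) :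
    (LKgen tt qq n m - 1) * (LKgen tt qq n m + qq • (1 : Matrix (BP n) (BP n) F2)) *
      (LKgen tt qq n m + (tt * qq ^ 2) • (1 : Matrix (BP n) (BP n) F2)) = 0 := by
  exact lk_cubic_general tt qq n m hm1 (by omega)
end
end

section
/- If J is a non-singular matrix with K(β) J K(β)* = J for all β ∈ B_n, then the characteristic polynomial f_β(z,t,q) = det(zI − K(β)(t,q)) satisfies f_β(z^{−1}, t^{−1}, q^{−1}) = (−z)^{−n(n−1)/2} · det(K(β))^{−1} · f_β(z, t, q); in particular f_β(z^{−1}, t^{−1}, q^{−1}) equals f_β(z,t,q) up to multiplication by a unit in ℤ[z^{±1}, t^{±1}, q^{±1}]. -/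
open Matrix

noncomputable section

/-
From `K(β) J K(β)* = J` we get `K(β)* = J⁻¹ K(β)⁻¹ J`; as transposition does not change the
characteristic polynomial, `K(β)(t⁻¹, q⁻¹)` has the characteristic polynomial of `K(β)⁻¹`.
For invertible `M`, the factorisation `z⁻¹ - M⁻¹ = -z⁻¹ M⁻¹ (z - M)` then relates the
characteristic polynomial of `M⁻¹` at `z⁻¹` to that of `M` at `z`.
-/

namespace Matrix

variable {n : Type*} [Fintype n] [DecidableEq n]

theorem charpoly_eq_charpoly_inv_of_mul_mul_transpose_eq {R : Type*} [CommRing R]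
    {M J A : Matrix n n R} (hM : IsUnit M) (hJ : IsUnit J) (h : M * J * Aᵀ = J) :
    A.charpoly = M⁻¹.charpoly := by
  have hAT : Aᵀ = J⁻¹ * M⁻¹ * J := by
    calc Aᵀ = J⁻¹ * M⁻¹ * (M * J * Aᵀ) := by
          simp only [Matrix.mul_assoc,
            nonsing_inv_mul_cancel_left _ _ ((isUnit_iff_isUnit_det M).mp hM),
            nonsing_inv_mul_cancel_left _ _ ((isUnit_iff_isUnit_det J).mp hJ)]
      _ = J⁻¹ * M⁻¹ * J := by rw [h]
  rw [← charpoly_transpose A, hAT, ← hJ.unit_spec, charpoly_units_conj']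

theorem eval_inv_charpoly_inv {K : Type*} [Field K] {M : Matrix n n K} (hM : IsUnit M.det)
    {z : K} (hz : z ≠ 0) :
    M⁻¹.charpoly.eval z⁻¹ = ((-z) ^ Fintype.card n)⁻¹ * M.det⁻¹ * M.charpoly.eval z := by
  have hfactor : scalar n z⁻¹ - M⁻¹ = (-z⁻¹) • (M⁻¹ * (scalar n z - M)) := by
    simp only [scalar_apply, ← smul_one_eq_diagonal]
    rw [Matrix.mul_sub, Matrix.mul_smul, Matrix.mul_one, nonsing_inv_mul _ hM, smul_sub,
      smul_smul, neg_mul, inv_mul_cancel₀ hz, neg_one_smul, neg_smul, sub_neg_eq_add,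
      neg_add_eq_sub]
  rw [eval_charpoly, eval_charpoly, hfactor, det_smul, det_mul, det_nonsing_inv,
    Ring.inverse_eq_inv', neg_inv, inv_pow]
  ring

end Matrix

theorem lk_charpoly_symmetry_general (n : ℕ) (K : Braid n →* GL (BP n) F2)
    (conj : F2 →+* F2)
    (J : Matrix (BP n) (BP n) F2) (hJ : J.det ≠ 0)
    (hU : ∀ β : Braid n,
      (K β : Matrix (BP n) (BP n) F2) * J * ((K β : Matrix (BP n) (BP n) F2).map conj)ᵀ = J)
    (β : Braid n) (z : F2) (hz : z ≠ 0) :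
    Polynomial.eval z⁻¹ ((K β : Matrix (BP n) (BP n) F2).map conj).charpoly =
      ((-z) ^ Fintype.card (BP n))⁻¹ * ((K β : Matrix (BP n) (BP n) F2).det)⁻¹ *
        Polynomial.eval z (K β : Matrix (BP n) (BP n) F2).charpoly := by
  have hKβ : IsUnit (K β : Matrix (BP n) (BP n) F2) := (K β).isUnit
  rw [charpoly_eq_charpoly_inv_of_mul_mul_transpose_eq hKβ
      ((isUnit_iff_isUnit_det J).mpr hJ.isUnit) (hU β),
    eval_inv_charpoly_inv ((isUnit_iff_isUnit_det _).mp hKβ) hz]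

/-- If `J` is non-singular and `K(β) J K(β)* = J` for all `β`, then the
characteristic polynomial `f_β(z,t,q) = det(zI − K(β))` satisfies
`f_β(z⁻¹, t⁻¹, q⁻¹) = (−z)^{−n(n−1)/2} · det(K(β))⁻¹ · f_β(z,t,q)`; in particular it equals
`f_β(z,t,q)` up to multiplication by a unit. -/
theorem lk_charpoly_symmetry (n : ℕ) (K : Braid n →* GL (BP n) F2)
    (hK : ∀ m : Fin (n - 1),
      (K (σg m) : Matrix (BP n) (BP n) F2) = LKgen tt qq n ((m : ℕ) + 1))
    (conj : F2 →+* F2) (hct : conj tt = tt⁻¹) (hcq : conj qq = qq⁻¹)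
    (J : Matrix (BP n) (BP n) F2) (hJ : J.det ≠ 0)
    (hU : ∀ β : Braid n,
      (K β : Matrix (BP n) (BP n) F2) * J * ((K β : Matrix (BP n) (BP n) F2).map conj)ᵀ = J)
    (β : Braid n) (z : F2) (hz : z ≠ 0) :
    Polynomial.eval z⁻¹ ((K β : Matrix (BP n) (BP n) F2).map conj).charpoly =
      ((-z) ^ Fintype.card (BP n))⁻¹ * ((K β : Matrix (BP n) (BP n) F2).det)⁻¹ *
        Polynomial.eval z (K β : Matrix (BP n) (BP n) F2).charpoly :=
  lk_charpoly_symmetry_general n K conj J hJ hU β z hz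
end
end

section
/- The matrix J whose (λ,μ) entry is given by the bifork multiplication table becomes, at q = 1, a diagonal matrix with all diagonal entries equal to (−t^{−1}+1)(1+t) and hence is non-singular; in particular det J, as an element of ℚ(t,q), is non-zero. -/
open Matrix

noncomputable section

/-- The bifork multiplication table `X_{k,l}·X*_{i,j}` with parameters `t`, `q`
(for indices with `k < l` and `i < j`). -/
def Jent {K : Type*} [Field K] (t q : K) (k l i j : ℕ) : K :=
  if i = k ∧ j = l then (-t⁻¹ + q) * (q⁻¹ + q * t)
  else if (i = k ∧ l < j) ∨ (k < i ∧ j = l) then t⁻¹ * (1 - q⁻¹)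
  else if j = k then -(1 - q⁻¹)
  else if (i < k ∧ j = l) ∨ (i = k ∧ j < l) then -(t * q * (1 - q))
  else if l = i then q * (1 - q)
  else if k < i ∧ i < l ∧ l < j then -((1 - q) ^ 2 * (t⁻¹ * q⁻¹ + 1))
  else if i < k ∧ k < j ∧ j < l then (1 - q) ^ 2 * (q⁻¹ + t)
  else 0

/-- The matrix `J` given by the bifork multiplication table, `J_{(k,l),(i,j)}`. -/
def Jmat {K : Type*} [Field K] (t q : K) (n : ℕ) : Matrix (BP n) (BP n) K :=
  fun r c => Jent t q (r.val.1 : ℕ) (r.val.2 : ℕ) (c.val.1 : ℕ) (c.val.2 : ℕ)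

/-!
Multiplying `J` by `t q` clears all denominators and gives a matrix `P` over `ℚ[t, q]`.
At `q = 1` every off-diagonal entry of the bifork table vanishes, so `P(t, 1) = t • J(t, 1)` is
diagonal with entries `t² - 1`. Evaluating at `(t, q) = (2, 1)` therefore shows that `det P` is a
nonzero polynomial, hence `det J = det P / (t q)^N ≠ 0` in `ℚ(t, q)`.
-/

/-- `t * q * Jent t q`, written without inverses so that it makes sense over any commutative
ring. -/
def Pent {R : Type*} [CommRing R] (t q : R) (k l i j : ℕ) : R :=
  if i = k ∧ j = l then q ^ 3 * t ^ 2 + q * t - q ^ 2 * t - 1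
  else if (i = k ∧ l < j) ∨ (k < i ∧ j = l) then q - 1
  else if j = k then t - t * q
  else if (i < k ∧ j = l) ∨ (i = k ∧ j < l) then t ^ 2 * q ^ 3 - t ^ 2 * q ^ 2
  else if l = i then t * q ^ 2 - t * q ^ 3
  else if k < i ∧ i < l ∧ l < j then -((1 - q) ^ 2 * (1 + t * q))
  else if i < k ∧ k < j ∧ j < l then (1 - q) ^ 2 * (t + t ^ 2 * q)
  else 0

def Pmat {R : Type*} [CommRing R] (t q : R) (n : ℕ) : Matrix (BP n) (BP n) R :=
  fun r c => Pent t q (r.val.1 : ℕ) (r.val.2 : ℕ) (c.val.1 : ℕ) (c.val.2 : ℕ)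

lemma map_Pent {R S : Type*} [CommRing R] [CommRing S] (f : R →+* S) (t q : R)
    (k l i j : ℕ) : f (Pent t q k l i j) = Pent (f t) (f q) k l i j := by
  unfold Pent
  split_ifs <;> simp only [map_mul, map_add, map_sub, map_neg, map_pow, map_one, map_zero]

lemma Pmat_map {R S : Type*} [CommRing R] [CommRing S] (f : R →+* S) (t q : R) (n : ℕ) :
    (Pmat t q n).map f = Pmat (f t) (f q) n := by
  ext r c
  exact map_Pent f t q _ _ _ _

lemma Pent_eq_mul_Jent {K : Type*} [Field K] {t q : K} (ht : t ≠ 0) (hq : q ≠ 0)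
    (k l i j : ℕ) : Pent t q k l i j = t * q * Jent t q k l i j := by
  unfold Jent Pent
  split_ifs <;> field_simp <;> ring

lemma Pmat_eq_smul_Jmat {K : Type*} [Field K] {t q : K} (ht : t ≠ 0) (hq : q ≠ 0) (n : ℕ) :
    Pmat t q n = (t * q) • Jmat t q n := by
  ext r c
  exact Pent_eq_mul_Jent ht hq _ _ _ _

lemma BP.eq_iff {n : ℕ} {r c : BP n} :
    r = c ↔ (c.val.1 : ℕ) = r.val.1 ∧ (c.val.2 : ℕ) = r.val.2 := by
  rw [Subtype.ext_iff, Prod.ext_iff, Fin.ext_iff, Fin.ext_iff, eq_comm, @eq_comm _ (r.val.2 : ℕ)]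

lemma Jent_one {K : Type*} [Field K] (t : K) (k l i j : ℕ) :
    Jent t 1 k l i j = if i = k ∧ j = l then (-t⁻¹ + 1) * (1 + t) else 0 := by
  unfold Jent
  split_ifs <;> simp

lemma Jmat_one {K : Type*} [Field K] (t : K) (n : ℕ) :
    Jmat t 1 n = diagonal fun _ => (-t⁻¹ + 1) * (1 + t) := by
  ext r c
  simp only [Jmat, Jent_one, diagonal_apply, BP.eq_iff]

theorem det_Jmat_ne_zero_of_specialize {R K L : Type*} [CommRing R] [Field K] [Field L]
    (φ : R →+* K) (hφ : Function.Injective φ) (ψ : R →+* L) {t q : R} (ht : φ t ≠ 0)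
    (hq : φ q ≠ 0) (hψt : ψ t ≠ 0) (hψq : ψ q = 1) (hψt2 : ψ t ^ 2 ≠ 1) (n : ℕ) :
    (Jmat (φ t) (φ q) n).det ≠ 0 := by
  have hspec : ψ (Pmat t q n).det ≠ 0 := by
    rw [RingHom.map_det, RingHom.mapMatrix_apply, Pmat_map, hψq, Pmat_eq_smul_Jmat hψt one_ne_zero,
      mul_one, Jmat_one, det_smul, det_diagonal, Finset.prod_const]
    have hdiag : (-(ψ t)⁻¹ + 1) * (1 + ψ t) = (ψ t ^ 2 - 1) / ψ t := by
      field_simp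
      ring
    rw [hdiag]
    exact mul_ne_zero (pow_ne_zero _ hψt) (pow_ne_zero _ (div_ne_zero (sub_ne_zero.mpr hψt2) hψt))
  have hP : (Pmat t q n).det ≠ 0 := fun h => hspec (by rw [h, map_zero])
  have hgen : φ (Pmat t q n).det ≠ 0 := (map_ne_zero_iff φ hφ).mpr hP
  rw [RingHom.map_det, RingHom.mapMatrix_apply, Pmat_map, Pmat_eq_smul_Jmat ht hq, det_smul]
    at hgen
  exact right_ne_zero_of_mul hgen

/-- At `q = 1` the bifork pairing matrix `J` is diagonal with all
diagonal entries equal to `(−t⁻¹+1)(1+t)`, and hence `J` is non-singular: its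
determinant, as an element of `ℚ(t,q)`, is non-zero. -/
theorem bifork_matrix_nonsingular (n : ℕ) :
    (∀ r c : BP n,
        (r = c → Jmat (RatFunc.X : RatFunc ℚ) 1 n r c = (-(RatFunc.X)⁻¹ + 1) * (1 + RatFunc.X)) ∧
        (r ≠ c → Jmat (RatFunc.X : RatFunc ℚ) 1 n r c = 0)) ∧
    (Jmat tt qq n).det ≠ 0 := by
  refine ⟨fun r c => ⟨?_, fun h => ?_⟩, ?_⟩
  · rintro rfl
    rw [Jmat_one, diagonal_apply_eq]
  · rw [Jmat_one, diagonal_apply_ne _ h]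
  · have hX (i : Fin 2) : algebraMap (MvPolynomial (Fin 2) ℚ) F2 (MvPolynomial.X i) ≠ 0 := by
      rw [Ne, IsFractionRing.to_map_eq_zero_iff]
      exact MvPolynomial.X_ne_zero i
    refine det_Jmat_ne_zero_of_specialize _ (IsFractionRing.injective _ F2)
      (MvPolynomial.eval ![2, 1]) (hX 0) (hX 1) ?_ ?_ ?_ n <;> norm_num
end
end

section
/- There exists a non-singular (n−1)×(n−1) matrix J₀ over ℤ[t^{±1}] such that for every n-braid β, B(β)* J₀ B(β) = J₀, where B is the reduced Burau representation and M* denotes the transpose of M with t replaced by t^{−1}. (Squier's theorem: the Burau representation is unitary.) -/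
/-! Squier's form `J = squierForm t (n-1)` is tridiagonal with diagonal `-(1+t)`, superdiagonal `t`
and subdiagonal `1`. Each generator matrix is a rank-one perturbation `1 + e_m w_m` of the
identity, and expanding `(1 + e_m w_m)^* J (1 + e_m w_m)` shows that the correction terms cancel
entrywise. The matrices preserving `J` form a subgroup, which therefore contains the whole image
of the braid group. Finally `J` is non-singular because at `t = 0` it is lower triangular with
diagonal `-1`, so `det J ≡ ±1 (mod t)`. -/

open Matrix

noncomputable section

/-- The reduced Burau matrix of the Artin generator `σ_{m+1}` (0-based `m`), acting on the
`(n-1)`-dimensional module: the identity except in row `m`, which has entries `1` in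
column `m-1`, `−t` in column `m`, and `t` in column `m+1` (columns out of range omitted). -/
def burau {R : Type*} [CommRing R] (t : R) (n m : ℕ) :
    Matrix (Fin (n - 1)) (Fin (n - 1)) R :=
  fun a b =>
    if (a : ℕ) ≠ m then (if a = b then 1 else 0)
    else if (b : ℕ) = m then -t
    else if (b : ℕ) + 1 = m then 1
    else if (b : ℕ) = m + 1 then t
    else 0

section SquierForm

variable {R S : Type*} [CommRing R] [CommRing S]

def squierForm (t : R) (k : ℕ) : Matrix (Fin k) (Fin k) R :=
  fun i j => if (i : ℕ) = j then -(1 + t) else if (i : ℕ) + 1 = j then t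
    else if (j : ℕ) + 1 = i then 1 else 0

lemma squierForm_map (f : R →+* S) (t : R) (k : ℕ) :
    (squierForm t k).map f = squierForm (f t) k := by
  ext i j
  simp only [squierForm, map_apply]
  split_ifs <;> simp

lemma squierForm_apply_mem {A : Type*} [SetLike A R] [SubringClass A R] {s : A} {t : R}
    (ht : t ∈ s) (k : ℕ) (i j : Fin k) : squierForm t k i j ∈ s := by
  unfold squierForm
  split_ifs
  exacts [neg_mem (add_mem (one_mem s) ht), ht, one_mem s, zero_mem s]

lemma det_squierForm_zero (k : ℕ) : (squierForm (0 : R) k).det = (-1) ^ k := by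
  rw [det_of_isLowerTriangular]
  · simp [squierForm]
  · intro i j hij
    have : (i : ℕ) < j := hij
    simp only [squierForm]
    split_ifs <;> first | omega | rfl

open Polynomial in
lemma det_squierForm_ratFuncX_ne_zero (K : Type*) [Field K] (k : ℕ) :
    (squierForm (RatFunc.X : RatFunc K) k).det ≠ 0 := by
  have hpoly : (squierForm (Polynomial.X : K[X]) k).det ≠ 0 := fun h => by
    have h0 := congrArg (Polynomial.evalRingHom 0) h
    rw [RingHom.map_det, RingHom.mapMatrix_apply, squierForm_map, Polynomial.coe_evalRingHom,
      Polynomial.eval_X, det_squierForm_zero, Polynomial.eval_zero] at h0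
    exact neg_one_pow_ne_zero _ h0
  rw [← RatFunc.algebraMap_X, ← squierForm_map, ← RingHom.mapMatrix_apply, ← RingHom.map_det]
  exact RatFunc.algebraMap_ne_zero hpoly

end SquierForm

section BurauGenerator

variable {R S : Type*} [CommRing R] [CommRing S]

def burauRow (t : R) (k m : ℕ) : Fin k → R :=
  fun j => if (j : ℕ) + 1 = m then 1 else if (j : ℕ) = m then -t - 1
    else if (j : ℕ) = m + 1 then t else 0

lemma burau_eq_one_add_vecMulVec (t : R) (n : ℕ) (m : Fin (n - 1)) :
    burau t n m = 1 + vecMulVec (Pi.single m 1) (burauRow t (n - 1) m) := by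
  ext a b
  simp only [burau, Matrix.add_apply, one_apply, vecMulVec_apply, burauRow, Pi.single_apply,
    Fin.ext_iff, ne_eq]
  split_ifs <;> first | ring1 | omega

lemma burau_map (f : R →+* S) (t : R) (n m : ℕ) :
    (burau t n m).map f = burau (f t) n m := by
  ext a b
  simp only [burau, map_apply]
  split_ifs <;> simp

end BurauGenerator

section BurauUnitary

variable {F : Type*} [Field F]

lemma burauRow_squierForm_cancel (t : F) (ht : t ≠ 0) (k : ℕ) (m i j : Fin k) :
    burauRow t⁻¹ k m i * squierForm t k m j + squierForm t k i m * burauRow t k m j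
      + squierForm t k m m * (burauRow t⁻¹ k m i * burauRow t k m j) = 0 := by
  simp only [squierForm, burauRow]
  split_ifs <;> first | ring1 | omega | (field_simp; ring1)

lemma burau_inv_transpose_mul_squierForm_mul_burau (t : F) (ht : t ≠ 0) (n : ℕ)
    (m : Fin (n - 1)) :
    (burau t⁻¹ n m)ᵀ * squierForm t (n - 1) * burau t n m = squierForm t (n - 1) := by
  rw [burau_eq_one_add_vecMulVec t⁻¹, burau_eq_one_add_vecMulVec t, transpose_add,
    transpose_one, transpose_vecMulVec, add_mul, one_mul, mul_add, mul_one, add_mul,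
    vecMulVec_mul, single_one_vecMul, mul_vecMulVec, mulVec_single_one, vecMulVec_mul_vecMulVec,
    dotProduct_single_one, row_apply]
  ext i j
  simp only [Matrix.add_apply, vecMulVec_apply, Pi.smul_apply, smul_eq_mul, row_apply, col_apply]
  linear_combination burauRow_squierForm_cancel t ht (n - 1) m i j

end BurauUnitary

section IsometryGroup

variable {ι R : Type*} [Fintype ι] [DecidableEq ι] [CommRing R]

def isometryGroup (σ : R →+* R) (J : Matrix ι ι R) : Subgroup (GL ι R) where
  carrier := {A | ((A : Matrix ι ι R).map σ)ᵀ * J * A = J}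
  one_mem' := by
    simp [Matrix.map_one σ (map_zero σ) (map_one σ)]
  mul_mem' {A B} hA hB := by
    simp only [Set.mem_ofPred_eq, Units.val_mul, Matrix.map_mul, transpose_mul] at hA hB ⊢
    calc _ = ((B : Matrix ι ι R).map σ)ᵀ * (((A : Matrix ι ι R).map σ)ᵀ * J * A) * B := by
          simp only [Matrix.mul_assoc]
      _ = J := by rw [hA, hB]
  inv_mem' {A} hA := by
    simp only [Set.mem_ofPred_eq] at hA ⊢
    have hA' : (((A⁻¹ : GL ι R) : Matrix ι ι R).map σ)ᵀ * ((A : Matrix ι ι R).map σ)ᵀ = 1 := by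
      rw [← transpose_mul, ← Matrix.map_mul, ← Units.val_mul, mul_inv_cancel, Units.val_one,
        Matrix.map_one σ (map_zero σ) (map_one σ), transpose_one]
    calc _ = (((A⁻¹ : GL ι R) : Matrix ι ι R).map σ)ᵀ * (((A : Matrix ι ι R).map σ)ᵀ * J * A)
          * (A⁻¹ : GL ι R) := by rw [hA]
      _ = J := by
        simp only [← Matrix.mul_assoc, hA', Matrix.one_mul]
        rw [Matrix.mul_assoc, ← Units.val_mul, mul_inv_cancel, Units.val_one, Matrix.mul_one]

lemma mem_isometryGroup {σ : R →+* R} {J : Matrix ι ι R} {A : GL ι R} :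
    A ∈ isometryGroup σ J ↔ ((A : Matrix ι ι R).map σ)ᵀ * J * A = J :=
  Iff.rfl

end IsometryGroup

/-- **Squier.** The reduced Burau representation is unitary: there is a
non-singular matrix `J₀` over `ℤ[t^{±1}]` with `B(β)* J₀ B(β) = J₀` for every braid `β`,
where `M*` is the transpose of `M` with `t` replaced by `t⁻¹` (implemented by the ring
homomorphism `conj` with `conj t = t⁻¹`). -/
theorem burau_unitary (n : ℕ) (B : Braid n →* GL (Fin (n - 1)) (RatFunc ℚ))
    (hB : ∀ m : Fin (n - 1),
      (B (σg m) : Matrix (Fin (n - 1)) (Fin (n - 1)) (RatFunc ℚ)) =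
        burau (RatFunc.X : RatFunc ℚ) n (m : ℕ))
    (conj : RatFunc ℚ →+* RatFunc ℚ) (hc : conj RatFunc.X = (RatFunc.X)⁻¹) :
    ∃ J0 : Matrix (Fin (n - 1)) (Fin (n - 1)) (RatFunc ℚ),
      (∀ a b, J0 a b ∈ Subring.closure {(RatFunc.X : RatFunc ℚ), (RatFunc.X)⁻¹}) ∧
      J0.det ≠ 0 ∧
      ∀ β : Braid n,
        ((B β : Matrix (Fin (n - 1)) (Fin (n - 1)) (RatFunc ℚ)).map conj)ᵀ * J0 *
          (B β : Matrix (Fin (n - 1)) (Fin (n - 1)) (RatFunc ℚ)) = J0 := by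
  refine ⟨squierForm RatFunc.X (n - 1),
    fun a b => squierForm_apply_mem (Subring.subset_closure (by simp)) _ a b,
    det_squierForm_ratFuncX_ne_zero ℚ _, fun β => ?_⟩
  have hgen : Subgroup.closure (Set.range (PresentedGroup.of (rels := braidRels n))) ≤
      (isometryGroup conj (squierForm RatFunc.X (n - 1))).comap B := by
    rw [Subgroup.closure_le]
    rintro _ ⟨m, rfl⟩
    rw [SetLike.mem_coe, Subgroup.mem_comap, mem_isometryGroup, ← σg, hB, burau_map, hc]
    exact burau_inv_transpose_mul_squierForm_mul_burau _ RatFunc.X_ne_zero n m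
  exact hgen (by rw [PresentedGroup.closure_range_of]; trivial)
end
end

section
/- The matrix J₀ = Σ_{i=1}^{n−1} (B(σ_i) − I_{n−1}) satisfies B(σ_m)* J₀ B(σ_m) = J₀ for every Artin generator σ_m of B_n, where * denotes transpose with t ↦ t^{−1}. -/
open Matrix

noncomputable section

section Aux
variable {R : Type*} [CommRing R]

/-- Row `m` of `B(σ) - I`. -/
def Rf (t : R) (m b : ℕ) : R :=
  if b = m then -(1 + t) else if b + 1 = m then 1 else if b = m + 1 then t else 0

lemma burau_apply (t : R) (n m : ℕ) (a b : Fin (n - 1)) :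
    burau t n m a b = (if a = b then (1 : R) else 0) + (if (a : ℕ) = m then Rf t m b else 0) := by
  simp only [burau, Rf, Fin.ext_iff]
  split_ifs <;> first | ring1 | omega | (exfalso; omega)

lemma J0_apply (t : R) (n : ℕ) (a b : Fin (n - 1)) :
    (∑ i : Fin (n - 1), (burau t n (i : ℕ) - 1)) a b = Rf t a b := by
  rw [Matrix.sum_apply]
  have h : ∀ i : Fin (n - 1), (burau t n (i : ℕ) - 1) a b
      = if i = a then Rf t (a : ℕ) (b : ℕ) else 0 := by
    intro i
    rw [Matrix.sub_apply, Matrix.one_apply, burau_apply]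
    by_cases hia : i = a
    · subst hia; simp
    · have : (a : ℕ) ≠ (i : ℕ) := fun hh => hia (Fin.ext hh.symm)
      simp [this, hia]
  simp [h]

lemma key {F : Type*} [Field F] {t : F} (ht : t ≠ 0) (a b m : ℕ) :
    Rf t⁻¹ m a * Rf t m b + (Rf t a m + Rf t⁻¹ m a * Rf t m m) * Rf t m b = 0 := by
  simp only [Rf]
  split_ifs <;> first | ring1 | omega | (exfalso; omega) | (field_simp; ring1) | field_simp

end Aux

/-- The matrix `J₀ = Σ_{i=1}^{n−1} (B(σ_i) − I)` satisfies
`B(σ_m)* J₀ B(σ_m) = J₀` for every Artin generator, where `*` is the transpose composed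
with `t ↦ t⁻¹` (implemented by `conj`). -/
theorem burau_form_invariant (n : ℕ)
    (conj : RatFunc ℚ →+* RatFunc ℚ) (hc : conj RatFunc.X = (RatFunc.X)⁻¹)
    (m : Fin (n - 1)) :
    ((burau (RatFunc.X : RatFunc ℚ) n (m : ℕ)).map conj)ᵀ *
        (∑ i : Fin (n - 1), (burau (RatFunc.X : RatFunc ℚ) n (i : ℕ) - 1)) *
        burau (RatFunc.X : RatFunc ℚ) n (m : ℕ) =
      ∑ i : Fin (n - 1), (burau (RatFunc.X : RatFunc ℚ) n (i : ℕ) - 1) := by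
  set t : RatFunc ℚ := RatFunc.X with hts
  have ht : t ≠ 0 := RatFunc.X_ne_zero
  have hconjR : ∀ (k b : ℕ), conj (Rf t k b) = Rf t⁻¹ k b := by
    intro k b
    simp [Rf, apply_ite conj, hc]
  have hA : ∀ a c : Fin (n - 1), ((burau t n (m : ℕ)).map conj)ᵀ a c
      = (if c = a then (1 : RatFunc ℚ) else 0)
        + (if c = m then Rf t⁻¹ (m : ℕ) (a : ℕ) else 0) := by
    intro a c
    rw [Matrix.transpose_apply, Matrix.map_apply, burau_apply, map_add,
      apply_ite conj, _root_.map_one, _root_.map_zero, apply_ite conj, _root_.map_zero, hconjR]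
    simp [Fin.val_eq_val]
  have hB : ∀ c b : Fin (n - 1), burau t n (m : ℕ) c b
      = (if c = b then (1 : RatFunc ℚ) else 0)
        + (if c = m then Rf t (m : ℕ) (b : ℕ) else 0) := by
    intro c b
    rw [burau_apply]
    simp [Fin.val_eq_val]
  ext a b
  have h1 : ∀ d : Fin (n - 1),
      (((burau t n (m : ℕ)).map conj)ᵀ * (∑ i : Fin (n - 1), (burau t n (i : ℕ) - 1))) a d
      = Rf t (a : ℕ) (d : ℕ) + Rf t⁻¹ (m : ℕ) (a : ℕ) * Rf t (m : ℕ) (d : ℕ) := by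
    intro d
    rw [Matrix.mul_apply]
    calc ∑ c, ((burau t n (m : ℕ)).map conj)ᵀ a c
          * (∑ i : Fin (n - 1), (burau t n (i : ℕ) - 1)) c d
        = ∑ c : Fin (n - 1), ((if c = a then Rf t (c : ℕ) (d : ℕ) else 0)
            + (if c = m then Rf t⁻¹ (m : ℕ) (a : ℕ) * Rf t (c : ℕ) (d : ℕ) else 0)) := by
          refine Finset.sum_congr rfl fun c _ => ?_
          rw [hA, J0_apply]
          split_ifs <;> ring
      _ = Rf t (a : ℕ) (d : ℕ) + Rf t⁻¹ (m : ℕ) (a : ℕ) * Rf t (m : ℕ) (d : ℕ) := by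
          rw [Finset.sum_add_distrib]
          simp
  rw [Matrix.mul_apply, J0_apply]
  calc ∑ d, (((burau t n (m : ℕ)).map conj)ᵀ * (∑ i : Fin (n - 1), (burau t n (i : ℕ) - 1))) a d
        * burau t n (m : ℕ) d b
      = ∑ d : Fin (n - 1),
          ((if d = b then Rf t (a : ℕ) (d : ℕ) + Rf t⁻¹ (m : ℕ) (a : ℕ) * Rf t (m : ℕ) (d : ℕ) else 0)
          + (if d = m then (Rf t (a : ℕ) (d : ℕ) + Rf t⁻¹ (m : ℕ) (a : ℕ) * Rf t (m : ℕ) (d : ℕ))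
              * Rf t (m : ℕ) (b : ℕ) else 0)) := by
        refine Finset.sum_congr rfl fun d _ => ?_
        rw [h1, hB]
        split_ifs <;> ring
    _ = (Rf t (a : ℕ) (b : ℕ) + Rf t⁻¹ (m : ℕ) (a : ℕ) * Rf t (m : ℕ) (b : ℕ))
        + (Rf t (a : ℕ) (m : ℕ) + Rf t⁻¹ (m : ℕ) (a : ℕ) * Rf t (m : ℕ) (m : ℕ))
          * Rf t (m : ℕ) (b : ℕ) := by
        rw [Finset.sum_add_distrib]
        simp
    _ = Rf t (a : ℕ) (b : ℕ) := by
        linear_combination key ht (a : ℕ) (b : ℕ) (m : ℕ)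
end
end

section
/- For each k, l ≥ 0, the matrix-valued invariant β ↦ (∂^{k+l}/∂t^k ∂q^l) K(β)(−1, 1) is a finite type invariant of order k + l: its ℤ-linear extension to the group ring ℤ[B_n] vanishes on the (k+l+1)-st power of the ideal I generated by {σ_i − σ_i^{−1} : 1 ≤ i ≤ n−1}. -/
/-!
At `t = -1`, `q = 1` the Lawrence–Krammer matrix of `σ_m` is the permutation matrix of the
transposition `(m m+1)` acting on the pairs `i < j`; this is an involution, so `K(σ_m)` and
`K(σ_m⁻¹)` have the same constant term and every entry of `K(σ_m - σ_m⁻¹)` has order at least 1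
as a power series in `t + 1`, `q - 1`. Orders add under multiplication, hence `K` maps `I^(k+l+1)`
to matrices whose entries have order at least `k + l + 1`, and their coefficients of
`(t+1)^k (q-1)^l` vanish.
-/

open Matrix

noncomputable section

/-- The power-series ring `ℚ[[t+1, q−1]]`: power series in `u = t+1` and `v = q−1`. -/
abbrev PS := MvPowerSeries (Fin 2) ℚ

/-- The variable `t = u − 1` in `ℚ[[u,v]]`, where `u = t + 1`. -/
def tP : PS := MvPowerSeries.X 0 - 1

/-- The variable `q = v + 1` in `ℚ[[u,v]]`, where `v = q − 1`. -/
def qP : PS := MvPowerSeries.X 1 + 1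

/-- The `m`-th power `I^(m)` of the two-sided ideal of the group ring `ℤ[B_n]` generated
by the elements `σ_i − σ_i⁻¹`, described as the `ℤ`-span of products with `m` factors
`σ_i − σ_i⁻¹` interleaved with arbitrary group ring elements. -/
def Ipow (n : ℕ) : ℕ → Submodule ℤ (MonoidAlgebra ℤ (Braid n))
  | 0 => ⊤
  | m + 1 =>
    Submodule.span ℤ
      {x | ∃ w ∈ Ipow n m, ∃ (i : Fin (n - 1)) (a : MonoidAlgebra ℤ (Braid n)),
        x = w * (MonoidAlgebra.of ℤ (Braid n) (σg i) -
                 MonoidAlgebra.of ℤ (Braid n) ((σg i)⁻¹)) * a}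

namespace MvPowerSeries

variable {σ R : Type*} [CommRing R]

def matrixOrderGE (ι κ : Type*) (m : ℕ∞) : AddSubgroup (Matrix ι κ (MvPowerSeries σ R)) where
  carrier := {A | ∀ i j, m ≤ (A i j).order}
  zero_mem' := by simp
  add_mem' hA hB i j := (le_min (hA i j) (hB i j)).trans min_order_le_add
  neg_mem' hA i j := by simpa [order_neg] using hA i j

variable {ι κ μ : Type*}

theorem mem_matrixOrderGE_zero (A : Matrix ι κ (MvPowerSeries σ R)) :
    A ∈ matrixOrderGE ι κ 0 := fun _ _ => zero_le

theorem mul_mem_matrixOrderGE [Fintype κ] {a b : ℕ∞} {A : Matrix ι κ (MvPowerSeries σ R)}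
    {B : Matrix κ μ (MvPowerSeries σ R)} (hA : A ∈ matrixOrderGE ι κ a)
    (hB : B ∈ matrixOrderGE κ μ b) : A * B ∈ matrixOrderGE ι μ (a + b) := fun i j =>
  Finset.sum_induction _ (fun f : MvPowerSeries σ R => a + b ≤ f.order)
    (fun _ _ hf hg => (le_min hf hg).trans min_order_le_add) (by simp)
    fun x _ => (add_le_add (hA i x) (hB x j)).trans le_order_mul

theorem sub_mem_matrixOrderGE_one {A B : Matrix ι κ (MvPowerSeries σ R)}
    (h : A.map constantCoeff = B.map constantCoeff) : A - B ∈ matrixOrderGE ι κ 1 := by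
  intro i j
  rw [one_le_order_iff_constCoeff_eq_zero, Matrix.sub_apply, map_sub, sub_eq_zero]
  exact congrFun (congrFun h i) j

end MvPowerSeries

namespace BP

variable {n : ℕ}

def permMap (τ : Equiv.Perm (Fin (n + 1))) (hτ : τ 0 = 0) (p : BP n) : BP n :=
  ⟨(min (τ p.val.1) (τ p.val.2), max (τ p.val.1) (τ p.val.2)), by
    have hi : p.val.1 ≠ 0 := Fin.ne_of_val_ne p.2.1.ne'
    have hj : p.val.2 ≠ 0 := Fin.ne_of_val_ne (p.2.1.trans p.2.2).ne'
    have hij : p.val.1 ≠ p.val.2 := Fin.ne_of_val_ne p.2.2.ne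
    have h1 : (τ p.val.1 : ℕ) ≠ 0 := Fin.val_ne_of_ne (hτ ▸ τ.injective.ne hi)
    have h2 : (τ p.val.2 : ℕ) ≠ 0 := Fin.val_ne_of_ne (hτ ▸ τ.injective.ne hj)
    have h12 : (τ p.val.1 : ℕ) ≠ τ p.val.2 := Fin.val_ne_of_ne (τ.injective.ne hij)
    simp only [Fin.coe_min, Fin.coe_max]
    omega⟩

theorem permMap_involutive (τ : Equiv.Perm (Fin (n + 1))) (hτ : τ 0 = 0)
    (hinv : Function.Involutive τ) : Function.Involutive (permMap τ hτ) := by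
  intro p
  have hlt : p.val.1 < p.val.2 := p.2.2
  apply Subtype.ext
  rcases le_total (τ p.val.1) (τ p.val.2) with h | h <;>
    simp [permMap, h, hinv _, hlt.le]

end BP

section LawrenceKrammer

variable {n : ℕ}

def lkTransposition (i : Fin (n - 1)) : Equiv.Perm (Fin (n + 1)) :=
  Equiv.swap ⟨i + 1, by omega⟩ ⟨i + 2, by omega⟩

theorem lkTransposition_zero (i : Fin (n - 1)) : lkTransposition i 0 = 0 :=
  Equiv.swap_apply_of_ne_of_ne (Fin.ne_of_val_ne (by simp)) (Fin.ne_of_val_ne (by simp))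

def lkPerm (i : Fin (n - 1)) : Equiv.Perm (BP n) :=
  (BP.permMap_involutive _ (lkTransposition_zero i) (Equiv.swap_apply_self _ _)).toPerm

theorem lkPerm_mul_self (i : Fin (n - 1)) : lkPerm i * lkPerm i = 1 :=
  Equiv.ext (BP.permMap_involutive _ (lkTransposition_zero i) (Equiv.swap_apply_self _ _))

theorem LKgen_neg_one_one {R : Type*} [CommRing R] (i : Fin (n - 1)) :
    LKgen (-1 : R) 1 n (i + 1) = (lkPerm i).permMatrix R := by
  ext r c
  obtain ⟨⟨⟨a, ha⟩, ⟨b, hb⟩⟩, hpos, hab⟩ := r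
  obtain ⟨⟨⟨a', ha'⟩, ⟨b', hb'⟩⟩, hpos', hab'⟩ := c
  dsimp only at hpos hab hpos' hab'
  simp only [LKgen, ee, PEquiv.toMatrix_apply, Equiv.toPEquiv_apply, Option.mem_def,
    Option.some.injEq, lkPerm, Function.Involutive.coe_toPerm, BP.permMap, lkTransposition,
    Equiv.swap_apply_def, Subtype.ext_iff, Prod.ext_iff, Fin.ext_iff, Fin.coe_min, Fin.coe_max,
    apply_ite Fin.val, one_pow, mul_one, one_mul, sub_self, zero_mul, mul_zero, add_zero,
    sub_zero, neg_neg]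
  split_ifs <;> first | rfl | omega

theorem permMatrix_lkPerm_mul_self {R : Type*} [CommRing R] (i : Fin (n - 1)) :
    (lkPerm i).permMatrix R * (lkPerm i).permMatrix R = 1 := by
  rw [← Matrix.permMatrix_mul, lkPerm_mul_self, Matrix.permMatrix_one]

theorem LKgen_map {R S : Type*} [CommRing R] [CommRing S] (f : R →+* S) (t q : R) (m : ℕ) :
    (LKgen t q n m).map f = LKgen (f t) (f q) n m := by
  ext r c
  simp only [Matrix.map_apply, LKgen]
  split_ifs <;> simp [ee, apply_ite f]

theorem constantCoeff_tP : MvPowerSeries.constantCoeff tP = -1 := by simp [tP]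

theorem constantCoeff_qP : MvPowerSeries.constantCoeff qP = 1 := by simp [qP]

variable (K : Braid n →* GL (BP n) PS)
  (hK : ∀ m : Fin (n - 1), (K (σg m) : Matrix (BP n) (BP n) PS) = LKgen tP qP n ((m : ℕ) + 1))
include hK

theorem map_constantCoeff_K_σg (i : Fin (n - 1)) :
    (K (σg i) : Matrix (BP n) (BP n) PS).map MvPowerSeries.constantCoeff =
      (lkPerm i).permMatrix ℚ := by
  rw [hK, LKgen_map, constantCoeff_tP, constantCoeff_qP, LKgen_neg_one_one]

theorem map_constantCoeff_K_σg_inv (i : Fin (n - 1)) :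
    (K (σg i)⁻¹ : Matrix (BP n) (BP n) PS).map MvPowerSeries.constantCoeff =
      (lkPerm i).permMatrix ℚ := by
  have hinv : (lkPerm i).permMatrix ℚ *
      (K (σg i)⁻¹ : Matrix (BP n) (BP n) PS).map MvPowerSeries.constantCoeff = 1 := by
    rw [← map_constantCoeff_K_σg K hK, ← Matrix.map_mul, ← Units.val_mul, ← map_mul,
      mul_inv_cancel, map_one, Units.val_one, Matrix.map_one _ (map_zero _) (map_one _)]
  exact (left_inv_eq_right_inv (permMatrix_lkPerm_mul_self i) hinv).symm

theorem K_σg_sub_K_σg_inv_mem_matrixOrderGE_one (i : Fin (n - 1)) :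
    (K (σg i) : Matrix (BP n) (BP n) PS) - (K (σg i)⁻¹ : Matrix (BP n) (BP n) PS) ∈
      MvPowerSeries.matrixOrderGE (BP n) (BP n) 1 :=
  MvPowerSeries.sub_mem_matrixOrderGE_one <| by
    rw [map_constantCoeff_K_σg K hK, map_constantCoeff_K_σg_inv K hK]

end LawrenceKrammer

theorem lift_mem_matrixOrderGE_of_mem_Ipow {n : ℕ} {ι σ R : Type*} [Fintype ι] [DecidableEq ι]
    [CommRing R] (ρ : Braid n →* Matrix ι ι (MvPowerSeries σ R))
    (hρ : ∀ i, ρ (σg i) - ρ (σg i)⁻¹ ∈ MvPowerSeries.matrixOrderGE ι ι 1) :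
    ∀ {m : ℕ} {W : MonoidAlgebra ℤ (Braid n)}, W ∈ Ipow n m →
      MonoidAlgebra.lift ℤ _ (Braid n) ρ W ∈ MvPowerSeries.matrixOrderGE ι ι m
  | 0, W, _ => MvPowerSeries.mem_matrixOrderGE_zero _
  | m + 1, W, hW => by
    refine Submodule.span_induction ?_ (by simp only [map_zero, zero_mem])
      (fun _ _ _ _ hx hy => by simpa only [map_add] using add_mem hx hy)
      (fun z _ _ hx => by simpa only [map_zsmul] using zsmul_mem hx z) hW
    rintro _ ⟨w, hw, i, a, rfl⟩
    have hgen := MvPowerSeries.mul_mem_matrixOrderGE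
      (MvPowerSeries.mul_mem_matrixOrderGE (lift_mem_matrixOrderGE_of_mem_Ipow ρ hρ hw) (hρ i))
      (MvPowerSeries.mem_matrixOrderGE_zero (MonoidAlgebra.lift ℤ _ (Braid n) ρ a))
    simpa only [map_mul, map_sub, MonoidAlgebra.lift_of, add_zero, Nat.cast_succ] using hgen

/-- For each `k, l ≥ 0`, the matrix invariant
`β ↦ (∂^{k+l}/∂t^k ∂q^l) K(β)(−1,1)` — which, expanding the entries of `K(β)` as power
series in `u = t+1`, `v = q−1`, equals `k!·l!` times the coefficient of `u^k v^l` — is a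
finite type invariant of order `k+l`: its `ℤ`-linear extension to the group ring
`ℤ[B_n]` vanishes on `I^(k+l+1)`, the `(k+l+1)`-st power of the ideal generated by the
elements `σ_i − σ_i⁻¹`. -/
theorem lk_derivative_finite_type (n : ℕ) (K : Braid n →* GL (BP n) PS)
    (hK : ∀ m : Fin (n - 1),
      (K (σg m) : Matrix (BP n) (BP n) PS) = LKgen tP qP n ((m : ℕ) + 1))
    (k l : ℕ) (W : MonoidAlgebra ℤ (Braid n)) (hW : W ∈ Ipow n (k + l + 1)) (r c : BP n) :
    (k.factorial * l.factorial : ℚ) *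
      MvPowerSeries.coeff (Finsupp.single 0 k + Finsupp.single 1 l)
        ((MonoidAlgebra.lift ℤ (Matrix (BP n) (BP n) PS) (Braid n)
            ((Units.coeHom (Matrix (BP n) (BP n) PS)).comp K) W) r c) = 0 := by
  have horder := lift_mem_matrixOrderGE_of_mem_Ipow ((Units.coeHom _).comp K)
    (K_σg_sub_K_σg_inv_mem_matrixOrderGE_one K hK) hW r c
  rw [MvPowerSeries.coeff_of_lt_order (horder.trans_lt' ?_), mul_zero]
  simp only [map_add, Finsupp.degree_single]
  exact_mod_cast Nat.lt_succ_self _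
end
end
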